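/- arXiv:1807.09831 — 6 statements merged into one kernel-verified Lean document; each statement's English description precedes it below -/
import Mathlib

section
/- Let p be a prime, d ≥ 1, and Q = F_p^d. Let G ≤ Sym(Q) be a permutation group such that the translation group T = {v ↦ v + a : a ∈ Q} is a normal subgroup of G and the stabiliser G_0 of 0 in G acts transitively on Q \ {0}. Then every normal p-subgroup of G is contained in T; in particular T is the largest normal p-subgroup of G (the p-core O_p(G) equals T). -/
open Equiv

namespace Paper

/-- A Hamming-graph automorphism of `Fin m → Q` given by entrywise permutations `h`
and a permutation `σ` of the entries. -/
def IsQAutPair {m : ℕ} {Q : Type*} (g : Perm (Fin m → Q)) (h : Fin m → Perm Q)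
    (σ : Perm (Fin m)) : Prop :=
  ∀ α i, g α i = h i (α (σ.symm i))

/-- `g` is an automorphism of the Hamming graph `H(m,q)`. -/
def IsQAut {m : ℕ} {Q : Type*} (g : Perm (Fin m → Q)) : Prop :=
  ∃ h σ, IsQAutPair g h σ

/-- The permutation group `X_i^{Q_i}` induced on the alphabet in entry `i`
by the stabiliser in `X` of the entry `i`. -/
def indQ {m : ℕ} {Q : Type*} (X : Set (Perm (Fin m → Q))) (i : Fin m) : Set (Perm Q) :=
  {π | ∃ g ∈ X, ∃ h σ, IsQAutPair g h σ ∧ σ i = i ∧ h i = π}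

/-- `C_s`, the set of vertices at Hamming distance exactly `s` from the code `C`. -/
def distSet {m : ℕ} {Q : Type*} [DecidableEq Q] (C : Set (Fin m → Q)) (s : ℕ) :
    Set (Fin m → Q) :=
  {v | (∃ c ∈ C, hammingDist v c = s) ∧ ∀ c ∈ C, s ≤ hammingDist v c}

/-- `C` is `(X,s)`-neighbour-transitive: `X` acts transitively on each of
`C = C_0, C_1, …, C_s`. -/
def NbrTrans {m : ℕ} {Q : Type*} [DecidableEq Q] (X : Set (Perm (Fin m → Q)))
    (C : Set (Fin m → Q)) (s : ℕ) : Prop :=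
  ∀ j ≤ s, ∀ u ∈ distSet C j, ∀ v ∈ distSet C j, ∃ g ∈ X, g u = v

/-- `δ` is the minimum distance of the code `C`. -/
def IsMinDist {m : ℕ} {Q : Type*} [DecidableEq Q] (C : Set (Fin m → Q)) (δ : ℕ) : Prop :=
  (∃ u ∈ C, ∃ v ∈ C, u ≠ v ∧ hammingDist u v = δ) ∧
  ∀ u ∈ C, ∀ v ∈ C, u ≠ v → δ ≤ hammingDist u v

/-- The alphabet `Q = F_p^d`. -/
abbrev QA (p d : ℕ) : Type := Fin d → ZMod p

/-- The vertex set `V = (F_p^d)^M` of `H(m, p^d)`. -/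
abbrev VA (p d m : ℕ) : Type := Fin m → QA p d

/-- The subgroup of `Sym(A)` consisting of all translations `v ↦ v + a`. -/
def TransSub (A : Type*) [AddCommGroup A] : Subgroup (Perm A) where
  carrier := {g : Perm A | ∃ a : A, ∀ v, g v = v + a}
  one_mem' := ⟨0, fun v => by simp⟩
  mul_mem' := fun {f g} hf hg => by
    obtain ⟨a, ha⟩ := hf
    obtain ⟨b, hb⟩ := hg
    exact ⟨b + a, fun v => by rw [Perm.mul_apply, hb, ha, add_assoc]⟩
  inv_mem' := fun {f} hf => by
    obtain ⟨a, ha⟩ := hf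
    refine ⟨-a, fun v => ?_⟩
    have h1 : f (v + -a) = v := by rw [ha]; abel
    calc f⁻¹ v = f⁻¹ (f (v + -a)) := by rw [h1]
      _ = v + -a := by first | simp | exact f.symm_apply_apply (v + -a)

/-- `K = X ∩ B`, the kernel of the action of `X` on the set of entries `M`:
the elements of `X` acting entrywise (with trivial permutation of `M`). -/
def KSet {p d m : ℕ} (X : Set (Perm (VA p d m))) : Set (Perm (VA p d m)) :=
  {g | g ∈ X ∧ ∃ h, IsQAutPair g h 1}

/-- The group `K^{Q_i}` induced on the alphabet in entry `i` by `K = X ∩ B`. -/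
def indK {p d m : ℕ} (X : Set (Perm (VA p d m))) (i : Fin m) : Set (Perm (QA p d)) :=
  {π | ∃ g ∈ X, ∃ h, IsQAutPair g h 1 ∧ h i = π}

/-- `C` is `X`-alphabet-affine: `X ≤ Aut(C)`, `K ≠ 1`, `X` is transitive on the entries,
and each `X_i^{Q_i}` is an affine 2-transitive group, i.e. it is 2-transitive on `Q_i`
and contains the translation group `T_i` as a normal subgroup. -/
def AlphabetAffine {p d m : ℕ} (X : Set (Perm (VA p d m))) (C : Set (VA p d m)) : Prop :=
  (∀ g ∈ X, IsQAut g) ∧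
  (∀ g ∈ X, g '' C = C) ∧
  (∃ g ∈ KSet X, g ≠ 1) ∧
  (∀ i j : Fin m, ∃ g ∈ X, ∃ h σ, IsQAutPair g h σ ∧ σ i = j) ∧
  (∀ i : Fin m,
    (∀ a b a' b' : QA p d, a ≠ b → a' ≠ b' → ∃ π ∈ indQ X i, π a = a' ∧ π b = b') ∧
    ((TransSub (QA p d) : Set (Perm (QA p d))) ⊆ indQ X i) ∧
    (∀ π ∈ indQ X i, ∀ t ∈ TransSub (QA p d), π * t * π⁻¹ ∈ TransSub (QA p d)))


theorem stmt1 (p d : ℕ) (hp : p.Prime) (hd : 1 ≤ d)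
    (G : Subgroup (Perm (QA p d)))
    (hT : TransSub (QA p d) ≤ G)
    (hTnorm : ∀ g ∈ G, ∀ t ∈ TransSub (QA p d), g * t * g⁻¹ ∈ TransSub (QA p d))
    (hG0 : ∀ a b : QA p d, a ≠ 0 → b ≠ 0 → ∃ g ∈ G, g 0 = 0 ∧ g a = b) :
    ∀ P : Subgroup (Perm (QA p d)), P ≤ G → IsPGroup p P →
      (∀ g ∈ G, ∀ t ∈ P, g * t * g⁻¹ ∈ P) → P ≤ TransSub (QA p d) := by
  intro P hPG hPp hPnorm
  haveI : Fact p.Prime := ⟨hp⟩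
  -- T is a p-group
  have hTp : IsPGroup p (TransSub (QA p d)) := by
    intro g
    obtain ⟨a, ha⟩ := g.2
    refine ⟨1, ?_⟩
    have key : ∀ n : ℕ, ∀ v, ((g : Perm (QA p d)) ^ n) v = v + n • a := by
      intro n
      induction n with
      | zero => intro v; simp
      | succ n ih =>
        intro v
        rw [pow_succ', Perm.mul_apply, ha, ih, succ_nsmul]
        abel
    have hpa : p • a = 0 := by
      funext i
      simp [nsmul_eq_mul, ZMod.natCast_self]
    ext1
    rw [pow_one]
    push_cast
    ext v
    simp [key p v, hpa]
  -- S = P ⊔ T is a p-group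
  set S : Subgroup (Perm (QA p d)) := P ⊔ TransSub (QA p d) with hSdef
  have hPnormT : P ≤ Subgroup.normalizer (TransSub (QA p d) : Set (Perm (QA p d))) := by
    intro π hπ
    rw [Subgroup.mem_normalizer_iff]
    intro t
    constructor
    · intro ht
      have := hTnorm π (hPG hπ) t ht
      simpa [mul_assoc] using this
    · intro ht
      have := hTnorm π⁻¹ (inv_mem (hPG hπ)) _ ht
      simpa [mul_assoc] using this
  have hSp : IsPGroup p S := IsPGroup.to_sup_of_normal_right' hPp hTp hPnormT
  have hSG : S ≤ G := sup_le hPG hT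
  -- S is normalized by G
  have hSnorm : ∀ g ∈ G, ∀ s ∈ S, g * s * g⁻¹ ∈ S := by
    intro g hg s hs
    have hmap : S.map (MulAut.conj g).toMonoidHom ≤ S := by
      rw [hSdef, Subgroup.map_sup]
      apply sup_le
      · rintro x ⟨y, hy, rfl⟩
        exact Subgroup.mem_sup_left (hPnorm g hg y hy)
      · rintro x ⟨y, hy, rfl⟩
        exact Subgroup.mem_sup_right (hTnorm g hg y hy)
    exact hmap ⟨s, hs, rfl⟩
  -- the stabilizer of 0 in S
  set S₀ : Subgroup (Perm (QA p d)) :=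
    S ⊓ MulAction.stabilizer (Perm (QA p d)) (0 : QA p d) with hS0def
  have hS0p : IsPGroup p S₀ := hSp.to_le inf_le_left
  -- fixed points of S₀
  have h0fix : (0 : QA p d) ∈ MulAction.fixedPoints S₀ (QA p d) := by
    intro σ
    have := σ.2.2
    show (σ : Perm (QA p d)) 0 = 0
    simpa using this
  have hcard : Nat.card (QA p d) ≡ Nat.card (MulAction.fixedPoints S₀ (QA p d)) [MOD p] :=
    hS0p.card_modEq_card_fixedPoints _
  have hcardQ : Nat.card (QA p d) = p ^ d := by
    simp [Nat.card_pi, Nat.card_zmod]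
  -- there is a nonzero fixed point
  have hex : ∃ a : QA p d, a ≠ 0 ∧ a ∈ MulAction.fixedPoints S₀ (QA p d) := by
    by_contra hcon
    push_neg at hcon
    have heq : MulAction.fixedPoints S₀ (QA p d) = {0} := by
      ext x
      simp only [Set.mem_singleton_iff]
      constructor
      · intro hx
        by_contra hne
        exact hne (by_contra fun h => hne ((hcon x h hx).elim))
      · rintro rfl; exact h0fix
    rw [heq] at hcard
    have h1 : Nat.card ({0} : Set (QA p d)) = 1 := by simp
    rw [h1, hcardQ] at hcard
    have hpd : p ^ d % p = 0 := Nat.mod_eq_zero_of_dvd (dvd_pow_self p (by omega))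
    have h1p : 1 % p = 1 := Nat.mod_eq_of_lt hp.one_lt
    unfold Nat.ModEq at hcard
    omega
  obtain ⟨a, ha0, hafix⟩ := hex
  -- every point is fixed by S₀
  have hall : ∀ b : QA p d, b ∈ MulAction.fixedPoints S₀ (QA p d) := by
    intro b
    by_cases hb : b = 0
    · rw [hb]; exact h0fix
    · obtain ⟨g, hg, hg0, hga⟩ := hG0 a b ha0 hb
      intro σ
      have hσS : (σ : Perm (QA p d)) ∈ S := σ.2.1
      have hσ0 : (σ : Perm (QA p d)) 0 = 0 := by
        have := σ.2.2; simpa using this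
      have hmem : g⁻¹ * σ * g ∈ S := by
        have := hSnorm g⁻¹ (inv_mem hg) σ hσS
        simpa using this
      have hmem0 : (g⁻¹ * (σ : Perm (QA p d)) * g) 0 = 0 := by
        simp only [Perm.mul_apply]
        rw [hg0, hσ0]
        exact Perm.inv_eq_iff_eq.mpr hg0.symm
      have hfa : (g⁻¹ * (σ : Perm (QA p d)) * g) a = a := by
        have := hafix ⟨g⁻¹ * σ * g, hmem, by simpa [MulAction.mem_stabilizer_iff] using hmem0⟩
        exact this
      have : (σ : Perm (QA p d)) (g a) = g a := by
        have h2 : g⁻¹ ((σ : Perm (QA p d)) (g a)) = a := by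
          simpa [Perm.mul_apply] using hfa
        have := congrArg g h2
        rwa [← Perm.mul_apply, mul_inv_cancel, Perm.one_apply] at this
      show σ • b = b
      rw [← hga]
      exact this
  -- hence every element of S fixing 0 is 1
  have htriv : ∀ σ ∈ S, σ 0 = 0 → σ = 1 := by
    intro σ hσ hσ0
    have hσ' : σ ∈ S₀ := ⟨hσ, by simpa [MulAction.mem_stabilizer_iff] using hσ0⟩
    apply Equiv.ext
    intro v
    have := hall v ⟨σ, hσ'⟩
    simpa using this
  -- conclude
  intro π hπ
  set a := π 0 with hadef
  have htmem : Equiv.addRight a ∈ TransSub (QA p d) := ⟨a, fun v => rfl⟩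
  have hσS : (Equiv.addRight a)⁻¹ * π ∈ S :=
    mul_mem (inv_mem (Subgroup.mem_sup_right htmem)) (Subgroup.mem_sup_left hπ)
  have hσ0 : ((Equiv.addRight a)⁻¹ * π) 0 = 0 := by
    simp [Perm.mul_apply, ← hadef]
  have := htriv _ hσS hσ0
  have hπeq : π = Equiv.addRight a := (inv_mul_eq_one.mp this).symm
  rw [hπeq]
  exact htmem

end Paper
end

section
/- Let C be a non-empty code in H(m,2) with minimum distance δ ≥ 5, and let X ≤ Aut(C) be such that T_C ≤ X and C is (X,2)-neighbour-transitive. Then: the zero vector lies in C and C is an F_2-subspace of V = F_2^m; every element of the stabiliser X_0 of the zero vector in X is a pure coordinate permutation v ↦ v^σ for some σ ∈ Sym(M); the group X_0 acts 2-homogeneously on M (transitively on the unordered pairs of distinct elements of M); C is invariant under X_0; and X = T_C ⋊ X_0, i.e., T_C is normal in X, X = T_C·X_0 and T_C ∩ X_0 = 1. -/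
/-!
Translations by codewords lie in `X`, so `C` is closed under addition and contains `0`, and every
`g ∈ X` has the form `v ↦ v^σ + g 0` with `g 0 ∈ C`. Since `δ ≥ 5`, every vector of weight `2`
lies in `C_2`; an element of `X` mapping one weight-`2` vector to another moves `0` by at most
`4 < δ`, hence fixes `0`. So transitivity of `X` on `C_2` is already realised by coordinate
permutations in `X_0`, which is `2`-homogeneity. Finally `g t_c g⁻¹ = t_{g c + g 0}` for affine `g`.
-/

open Equiv

namespace Paper

/-- The vertex set `V = F_2^m` of the binary Hamming graph `H(m,2)`. -/
abbrev BV (m : ℕ) : Type := Fin m → ZMod 2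

/-- `g` is an automorphism of the binary Hamming graph `H(m,2)`:
`g : v ↦ v^σ + c` for some `σ ∈ Sym(M)` and `c ∈ V`. -/
def IsB2Aut {m : ℕ} (g : Perm (BV m)) : Prop :=
  ∃ (σ : Perm (Fin m)) (c : BV m), ∀ v, g v = (fun i => v (σ.symm i)) + c

/-- The dual of a binary code under the standard inner product. -/
def dualCode {m : ℕ} (D : Set (BV m)) : Set (BV m) :=
  {w | ∀ v ∈ D, (∑ i, v i * w i) = 0}

open Finset

theorem add_mem_of_forall_addRight_image_eq {V : Type*} [AddGroup V] {C : Set V}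
    (hC : ∀ c ∈ C, Equiv.addRight c '' C = C) {a b : V} (ha : a ∈ C) (hb : b ∈ C) :
    a + b ∈ C :=
  hC b hb ▸ Set.mem_image_of_mem _ ha

theorem zero_mem_of_forall_addRight_image_eq {V : Type*} [AddCommGroup V] [Module (ZMod 2) V]
    {C : Set V} (hC : ∀ c ∈ C, Equiv.addRight c '' C = C) (hne : C.Nonempty) : (0 : V) ∈ C := by
  obtain ⟨c, hc⟩ := hne
  simpa only [ZModModule.add_self] using add_mem_of_forall_addRight_image_eq hC hc hc

section Hamming

variable {ι R : Type*} [Fintype ι] [DecidableEq R]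

theorem hammingNorm_indicator_one [MulZeroOneClass R] [NeZero (1 : R)] (s : Finset ι) :
    hammingNorm ((s : Set ι).indicator (1 : ι → R)) = #s := by
  unfold hammingNorm
  congr 1
  ext i
  simp

theorem hammingDist_comp_symm (σ : Perm ι) (x y : ι → R) :
    hammingDist (fun i => x (σ.symm i)) (fun i => y (σ.symm i)) = hammingDist x y :=
  card_equiv σ.symm fun i => by simp

theorem hammingDist_add_right [AddRightCancelSemigroup R] (x y c : ι → R) :
    hammingDist (x + c) (y + c) = hammingDist x y :=
  hammingDist_comp (fun i a => a + c i) fun i => add_left_injective (c i)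

end Hamming

theorem indicator_one_comp_symm {ι R : Type*} [Zero R] [One R] (σ : Perm ι) (s : Set ι) :
    (fun i => s.indicator (1 : ι → R) (σ.symm i)) = (σ '' s).indicator 1 := by
  rw [Equiv.image_eq_preimage_symm]
  rfl

section DistSet

variable {m d : ℕ} {Q : Type*} [DecidableEq Q] [Zero Q] {C : Set (Fin m → Q)}

theorem mem_distSet_hammingNorm (hd : ∀ u ∈ C, ∀ v ∈ C, u ≠ v → d ≤ hammingDist u v)
    (h0 : 0 ∈ C) {v : Fin m → Q} (hv : 2 * hammingNorm v < d) :
    v ∈ distSet C (hammingNorm v) := by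
  refine ⟨⟨0, h0, hammingDist_zero_right v⟩, fun c hc => ?_⟩
  rcases eq_or_ne c 0 with rfl | hc0
  · rw [hammingDist_zero_right]
  · have hdc := hd c hc 0 h0 hc0
    have htri := hammingDist_triangle c v 0
    rw [hammingDist_comm c v, hammingDist_zero_right v] at htri
    omega

theorem apply_zero_eq_zero_of_hammingDist_eq
    (hd : ∀ u ∈ C, ∀ v ∈ C, u ≠ v → d ≤ hammingDist u v) (h0 : 0 ∈ C)
    {g : Perm (Fin m → Q)} (hg : ∀ u v, hammingDist (g u) (g v) = hammingDist u v)
    (hg0 : g 0 ∈ C) (u : Fin m → Q) (hu : hammingNorm u + hammingNorm (g u) < d) : g 0 = 0 := by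
  by_contra hne
  have hdg := hd _ hg0 0 h0 hne
  have htri := hammingDist_triangle (g 0) (g u) 0
  rw [hg, hammingDist_zero_left, hammingDist_zero_right (g u)] at htri
  omega

end DistSet

section B2Aut

variable {m : ℕ} {g : Perm (BV m)}

theorem IsB2Aut.exists_perm (hg : IsB2Aut g) :
    ∃ σ : Perm (Fin m), ∀ v, g v = (fun i => v (σ.symm i)) + g 0 := by
  obtain ⟨σ, c, h⟩ := hg
  have hc : g 0 = c := (h 0).trans (zero_add c)
  exact ⟨σ, fun v => hc ▸ h v⟩

theorem IsB2Aut.exists_perm_of_apply_zero (hg : IsB2Aut g) (h0 : g 0 = 0) :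
    ∃ σ : Perm (Fin m), ∀ v, g v = fun i => v (σ.symm i) := by
  obtain ⟨σ, h⟩ := hg.exists_perm
  exact ⟨σ, fun v => by rw [h, h0, add_zero]⟩

theorem IsB2Aut.hammingDist_apply (hg : IsB2Aut g) (u v : BV m) :
    hammingDist (g u) (g v) = hammingDist u v := by
  obtain ⟨σ, h⟩ := hg.exists_perm
  rw [h u, h v, hammingDist_add_right, hammingDist_comp_symm]

theorem IsB2Aut.apply_add (hg : IsB2Aut g) (u v : BV m) : g (u + v) = g u + g v + g 0 := by
  obtain ⟨σ, h⟩ := hg.exists_perm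
  rw [h (u + v), h u, h v]
  change (fun i => u (σ.symm i)) + (fun i => v (σ.symm i)) + g 0 = _
  linear_combination (ZModModule.add_self (g 0)).symm

theorem IsB2Aut.mul_addRight_mul_inv (hg : IsB2Aut g) (c : BV m) :
    g * Equiv.addRight c * g⁻¹ = Equiv.addRight (g c + g 0) := by
  ext1 w
  simp [Perm.mul_apply, hg.apply_add, add_assoc]

end B2Aut

theorem exists_mem_stabilizer_image_eq {m d r : ℕ} {C : Set (BV m)}
    {X : Subgroup (Perm (BV m))} (hd : ∀ u ∈ C, ∀ v ∈ C, u ≠ v → d ≤ hammingDist u v)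
    (h0 : 0 ∈ C) (hXaut : ∀ g ∈ X, IsB2Aut g) (hXC : ∀ g ∈ X, g '' C = C)
    (hNT : NbrTrans (X : Set (Perm (BV m))) C r) (hr : 2 * r < d)
    {s t : Finset (Fin m)} (hs : #s = r) (ht : #t = r) :
    ∃ g ∈ X, g 0 = 0 ∧ ∃ σ : Perm (Fin m), (∀ v, g v = fun i => v (σ.symm i)) ∧
      σ '' s = t := by
  have hnorm : ∀ {u : Finset (Fin m)}, #u = r →
      hammingNorm ((u : Set (Fin m)).indicator (1 : BV m)) = r := fun hu => by
    rw [hammingNorm_indicator_one, hu]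
  have hmem : ∀ {u : Finset (Fin m)}, #u = r → (u : Set (Fin m)).indicator 1 ∈ distSet C r :=
    fun hu => hnorm hu ▸ mem_distSet_hammingNorm hd h0 (by rw [hnorm hu]; exact hr)
  obtain ⟨g, hgX, hg⟩ := hNT r le_rfl _ (hmem hs) _ (hmem ht)
  have hg0 : g 0 = 0 :=
    apply_zero_eq_zero_of_hammingDist_eq hd h0 (hXaut g hgX).hammingDist_apply
      (hXC g hgX ▸ Set.mem_image_of_mem g h0) _ (by rw [hg, hnorm hs, hnorm ht]; omega)
  obtain ⟨σ, hσ⟩ := (hXaut g hgX).exists_perm_of_apply_zero hg0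
  refine ⟨g, hgX, hg0, σ, hσ, ?_⟩
  rw [hσ, indicator_one_comp_symm] at hg
  exact Set.indicator_one_inj (ZMod 2) hg

theorem stmt7 (m : ℕ) (C : Set (BV m)) (hCne : C.Nonempty)
    (hδ : ∀ u ∈ C, ∀ v ∈ C, u ≠ v → 5 ≤ hammingDist u v)
    (X : Subgroup (Perm (BV m)))
    (hXaut : ∀ g ∈ X, IsB2Aut g)
    (hXC : ∀ g ∈ X, g '' C = C)
    (hTC : ∀ c ∈ C, Equiv.addRight c ∈ X)
    (hNT : NbrTrans (X : Set (Perm (BV m))) C 2) :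
    -- `0 ∈ C` and `C` is an `F_2`-subspace of `V`
    ((0 : BV m) ∈ C ∧ ∀ a ∈ C, ∀ b ∈ C, a + b ∈ C) ∧
    -- every element of `X_0` is a pure coordinate permutation
    (∀ g ∈ X, g (0 : BV m) = 0 →
      ∃ σ : Perm (Fin m), ∀ v, g v = fun i => v (σ.symm i)) ∧
    -- `X_0` acts 2-homogeneously on `M`
    (∀ i j k l : Fin m, i ≠ j → k ≠ l → ∃ g ∈ X, g (0 : BV m) = 0 ∧
      ∃ σ : Perm (Fin m), (∀ v, g v = fun i' => v (σ.symm i')) ∧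
        ((σ i = k ∧ σ j = l) ∨ (σ i = l ∧ σ j = k))) ∧
    -- `C` is invariant under `X_0`
    (∀ g ∈ X, g (0 : BV m) = 0 → ∀ c ∈ C, g c ∈ C) ∧
    -- `X = T_C ⋊ X_0`: `T_C` is normal in `X`, `X = T_C · X_0` and `T_C ∩ X_0 = 1`
    (∀ g ∈ X, ∀ c ∈ C, ∃ c' ∈ C, g * Equiv.addRight c * g⁻¹ = Equiv.addRight c') ∧
    (∀ g ∈ X, ∃ c ∈ C, ∃ y ∈ X, y (0 : BV m) = 0 ∧ g = Equiv.addRight c * y) ∧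
    (∀ c ∈ C, (Equiv.addRight c : Perm (BV m)) 0 = 0 → Equiv.addRight c = (1 : Perm (BV m))) := by
  have hT : ∀ c ∈ C, Equiv.addRight c '' C = C := fun c hc => hXC _ (hTC c hc)
  have h0 : (0 : BV m) ∈ C := zero_mem_of_forall_addRight_image_eq hT hCne
  have hadd : ∀ a ∈ C, ∀ b ∈ C, a + b ∈ C := fun a ha b hb =>
    add_mem_of_forall_addRight_image_eq hT ha hb
  have hmaps : ∀ g ∈ X, ∀ c ∈ C, g c ∈ C := fun g hg c hc =>
    hXC g hg ▸ Set.mem_image_of_mem g hc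
  refine ⟨⟨h0, hadd⟩, fun g hg => (hXaut g hg).exists_perm_of_apply_zero, ?_,
    fun g hg _ => hmaps g hg, ?_, ?_, ?_⟩
  · intro i j k l hij hkl
    obtain ⟨g, hgX, hg0, σ, hσ, hst⟩ := exists_mem_stabilizer_image_eq hδ h0 hXaut hXC hNT
      (by norm_num) (card_pair hij) (card_pair hkl)
    refine ⟨g, hgX, hg0, σ, hσ, ?_⟩
    rwa [coe_pair, coe_pair, Set.image_pair, Set.pair_eq_pair_iff] at hst
  · intro g hg c hc
    exact ⟨g c + g 0, hadd _ (hmaps g hg c hc) _ (hmaps g hg 0 h0),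
      (hXaut g hg).mul_addRight_mul_inv c⟩
  · intro g hg
    have hT0 := hTC _ (hmaps g hg 0 h0)
    refine ⟨g 0, hmaps g hg 0 h0, (Equiv.addRight (g 0))⁻¹ * g, mul_mem (inv_mem hT0) hg, ?_,
      (mul_inv_cancel_left _ _).symm⟩
    simp [Perm.mul_apply, Perm.inv_def]
  · intro c _ hc0
    have hc : c = 0 := (zero_add c).symm.trans hc0
    rw [hc, addRight_zero, Perm.one_def]

end Paper
end

section
/- Let G ≤ Sym(M) act 2-homogeneously on M, where |M| = m ≥ 5, let V = F_2^m with G acting by permuting coordinates, let Y = {0, 1} ⊆ V (the binary repetition code, where 1 is the all-ones vector), and let C be a G-invariant F_2-subspace of V. Set X = T_C ⋊ G = {v ↦ v^σ + c : σ ∈ G, c ∈ C}. Then X ≤ Aut(C), and precisely one of the following holds, where δ denotes the minimum distance of C when |C| ≥ 2: (1) C = {0}; (2) δ = 1 and C = V; (3) δ = m, C = Y, and C is (X,2)-neighbour-transitive; (4) δ = 2, C = Y^⊥ (the even-weight code, i.e., the dual of Y under the standard inner product), and C is (X,1)-neighbour-transitive; (5) δ = 3, C is a perfect code (every vertex of V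 is at Hamming distance at most 1 from exactly one codeword), and C is (X,1)-neighbour-transitive; (6) 4 ≤ δ < m and C is (X,2)-neighbour-transitive. -/
open Equiv

namespace Paper

section Helpers
variable {m : ℕ}

lemma z2cases : ∀ a : ZMod 2, a = 0 ∨ a = 1 := by decide

lemma bv_add_self (v : BV m) : v + v = 0 := funext fun i => by
  have : ∀ a : ZMod 2, a + a = 0 := by decide
  exact this (v i)

lemma bv_sub (u v : BV m) : u - v = u + v := funext fun i => by
  have : ∀ a b : ZMod 2, a - b = a + b := by decide
  exact this _ _

lemma bv_dist (u v : BV m) : hammingDist u v = hammingNorm (u + v) := by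
  rw [hammingDist_eq_hammingNorm]
  congr 1
  funext i
  have : ∀ a b : ZMod 2, -a + b = a + b := by decide
  exact this _ _

lemma bv_ext_supp {u v : BV m} (h : ∀ i, u i ≠ 0 ↔ v i ≠ 0) : u = v := funext fun i => by
  have hi := h i
  rcases z2cases (u i) with h1 | h1 <;> rcases z2cases (v i) with h2 | h2 <;>
    rw [h1, h2] <;> rw [h1, h2] at hi <;> simp at hi <;> simp

def supp (v : BV m) : Finset (Fin m) := Finset.univ.filter (fun i => v i ≠ 0)

lemma mem_supp {v : BV m} {i : Fin m} : i ∈ supp v ↔ v i ≠ 0 := by simp [supp]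

lemma norm_eq_supp (v : BV m) : hammingNorm v = (supp v).card := rfl

def pact (σ : Perm (Fin m)) (v : BV m) : BV m := fun i => v (σ.symm i)

lemma pact_add (σ : Perm (Fin m)) (u v : BV m) : pact σ (u + v) = pact σ u + pact σ v := rfl

lemma pact_one (v : BV m) : pact (1 : Perm (Fin m)) v = v := rfl

lemma pact_pact_inv (σ : Perm (Fin m)) (v : BV m) : pact σ (pact σ⁻¹ v) = v := funext fun i => by
  simp [pact, Perm.inv_def]

lemma pact_norm (σ : Perm (Fin m)) (v : BV m) : hammingNorm (pact σ v) = hammingNorm v := by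
  rw [norm_eq_supp, norm_eq_supp]
  have hs : supp (pact σ v) = (supp v).image σ := by
    ext x
    simp only [mem_supp, Finset.mem_image, pact]
    constructor
    · intro h; exact ⟨σ.symm x, by simpa [mem_supp] using h, by simp⟩
    · rintro ⟨y, hy, rfl⟩; simpa using hy
  rw [hs, Finset.card_image_of_injective _ σ.injective]

def permOf (σ : Perm (Fin m)) (c : BV m) : Perm (BV m) where
  toFun v := pact σ v + c
  invFun w := pact σ⁻¹ (w + c)
  left_inv v := by
    show pact σ⁻¹ (pact σ v + c + c) = v
    rw [add_assoc, bv_add_self, add_zero]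
    funext i; simp [pact, Perm.inv_def]
  right_inv w := by
    show pact σ (pact σ⁻¹ (w + c)) + c = w
    rw [pact_pact_inv, add_assoc, bv_add_self, add_zero]

lemma permOf_apply (σ : Perm (Fin m)) (c : BV m) (v : BV m) :
    permOf σ c v = pact σ v + c := rfl

end Helpers

section Helpers2
variable {m : ℕ}

lemma wt1 {w : BV m} (h : hammingNorm w = 1) : ∃ i, ∀ x, w x ≠ 0 ↔ x = i := by
  rw [norm_eq_supp, Finset.card_eq_one] at h
  obtain ⟨i, hi⟩ := h
  exact ⟨i, fun x => by rw [← mem_supp, hi, Finset.mem_singleton]⟩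

lemma wt2 {w : BV m} (h : hammingNorm w = 2) :
    ∃ i j, i ≠ j ∧ ∀ x, w x ≠ 0 ↔ x = i ∨ x = j := by
  rw [norm_eq_supp, Finset.card_eq_two] at h
  obtain ⟨i, j, hij, hs⟩ := h
  exact ⟨i, j, hij, fun x => by rw [← mem_supp, hs, Finset.mem_insert, Finset.mem_singleton]⟩

lemma two_in_supp {w : BV m} (h : 2 ≤ hammingNorm w) :
    ∃ i j, i ≠ j ∧ w i ≠ 0 ∧ w j ≠ 0 := by
  rw [norm_eq_supp] at h
  obtain ⟨i, hi, j, hj, hij⟩ := Finset.one_lt_card.1 (show 1 < (supp w).card by omega)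
  exact ⟨i, j, hij, mem_supp.1 hi, mem_supp.1 hj⟩

lemma exists_third (hm : 5 ≤ m) (i k : Fin m) : ∃ x : Fin m, x ≠ i ∧ x ≠ k := by
  by_contra h
  push_neg at h
  have hsub : (Finset.univ : Finset (Fin m)) ⊆ {i, k} := by
    intro x _
    by_cases hxi : x = i
    · simp [hxi]
    · simp [h x hxi]
  have h2 := Finset.card_le_card hsub
  have h3 : ({i, k} : Finset (Fin m)).card ≤ 2 := Finset.card_insert_le _ _ |>.trans (by simp)
  simp only [Finset.card_univ, Fintype.card_fin] at h2
  omega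

lemma Gtrans (hm : 5 ≤ m) (G : Subgroup (Perm (Fin m)))
    (hG : ∀ i j k l : Fin m, i ≠ j → k ≠ l →
      ∃ σ ∈ G, (σ i = k ∧ σ j = l) ∨ (σ i = l ∧ σ j = k)) :
    ∀ i k : Fin m, ∃ σ ∈ G, σ i = k := by
  intro i k
  by_cases hik : i = k
  · exact ⟨1, G.one_mem, by simp [hik]⟩
  · obtain ⟨x, hxi, hxk⟩ := exists_third hm i k
    obtain ⟨σ, hσ, hcase⟩ := hG i x k x (fun h => hxi h.symm) (fun h => hxk h.symm)
    rcases hcase with ⟨h1, _⟩ | ⟨h1, h2⟩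
    · exact ⟨σ, hσ, h1⟩
    · exact ⟨σ * σ, G.mul_mem hσ hσ, by simp [Perm.mul_apply, h1, h2]⟩

end Helpers2

section Main
variable {m : ℕ} (G : Subgroup (Perm (Fin m))) (C : Submodule (ZMod 2) (BV m))
  (X : Set (Perm (BV m)))

lemma mapInX (hInv : ∀ σ ∈ G, ∀ v ∈ C, (fun i => v (σ.symm i)) ∈ C)
    (hX : X = {g | ∃ σ ∈ G, ∃ c ∈ C, ∀ v, g v = (fun i => v (σ.symm i)) + c})
    {σ : Perm (Fin m)} (hσ : σ ∈ G) {u v cu cv : BV m} (hcu : cu ∈ C) (hcv : cv ∈ C)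
    (h : pact σ (u + cu) = v + cv) : ∃ g ∈ X, g u = v := by
  refine ⟨permOf σ (cv + pact σ cu), ?_, ?_⟩
  · rw [hX]
    exact ⟨σ, hσ, cv + pact σ cu, C.add_mem hcv (hInv σ hσ cu hcu), fun w => rfl⟩
  · show pact σ u + (cv + pact σ cu) = v
    rw [pact_add] at h
    have e : pact σ u + (cv + pact σ cu) = (pact σ u + pact σ cu) + cv := by abel
    rw [e, h, add_assoc, bv_add_self, add_zero]

lemma nt2 (hm : 5 ≤ m)
    (hG : ∀ i j k l : Fin m, i ≠ j → k ≠ l →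
      ∃ σ ∈ G, (σ i = k ∧ σ j = l) ∨ (σ i = l ∧ σ j = k))
    (hInv : ∀ σ ∈ G, ∀ v ∈ C, (fun i => v (σ.symm i)) ∈ C)
    (hX : X = {g | ∃ σ ∈ G, ∃ c ∈ C, ∀ v, g v = (fun i => v (σ.symm i)) + c}) :
    NbrTrans X (C : Set (BV m)) 2 := by
  intro j hj u hu v hv
  obtain ⟨⟨cu, hcu, hdu⟩, _⟩ := hu
  obtain ⟨⟨cv, hcv, hdv⟩, _⟩ := hv
  rw [bv_dist] at hdu hdv
  interval_cases j
  · have h1 : u + cu = 0 := hammingNorm_eq_zero.1 hdu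
    have h2 : v + cv = 0 := hammingNorm_eq_zero.1 hdv
    exact mapInX G C X hInv hX G.one_mem hcu hcv (by rw [pact_one, h1, h2])
  · obtain ⟨a, ha⟩ := wt1 hdu
    obtain ⟨b, hb⟩ := wt1 hdv
    obtain ⟨σ, hσ, hab⟩ := Gtrans hm G hG a b
    apply mapInX G C X hInv hX hσ hcu hcv
    apply bv_ext_supp; intro x
    show (u + cu) (σ.symm x) ≠ 0 ↔ (v + cv) x ≠ 0
    rw [ha, hb, Equiv.symm_apply_eq, hab]
  · obtain ⟨a, a', haa, ha⟩ := wt2 hdu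
    obtain ⟨b, b', hbb, hb⟩ := wt2 hdv
    obtain ⟨σ, hσ, hcase⟩ := hG a a' b b' haa hbb
    apply mapInX G C X hInv hX hσ hcu hcv
    apply bv_ext_supp; intro x
    show (u + cu) (σ.symm x) ≠ 0 ↔ (v + cv) x ≠ 0
    rw [ha, hb]
    have key : ∀ y z, σ y = z → (σ.symm x = y ↔ x = z) := fun y z h => by
      rw [Equiv.symm_apply_eq, h]
    rcases hcase with ⟨h1, h2⟩ | ⟨h1, h2⟩
    · rw [key _ _ h1, key _ _ h2]
    · rw [key _ _ h1, key _ _ h2, or_comm]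

end Main

section Cases
variable {m : ℕ}

lemma single_supp {i x : Fin m} : (Pi.single i 1 : BV m) x ≠ 0 ↔ x = i := by
  rcases eq_or_ne x i with h | h <;> simp [Pi.single_apply, h]

lemma pair_supp {i j x : Fin m} (hij : i ≠ j) :
    ((Pi.single i 1 + Pi.single j 1 : BV m)) x ≠ 0 ↔ x = i ∨ x = j := by
  rcases eq_or_ne x i with h1 | h1 <;> rcases eq_or_ne x j with h2 | h2 <;>
    simp [Pi.single_apply, h1, h2] <;> simp_all

variable (G : Subgroup (Perm (Fin m))) (C : Submodule (ZMod 2) (BV m))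

-- δ = 1 case
lemma caseOne (hm : 5 ≤ m)
    (hG : ∀ i j k l : Fin m, i ≠ j → k ≠ l →
      ∃ σ ∈ G, (σ i = k ∧ σ j = l) ∨ (σ i = l ∧ σ j = k))
    (hInv : ∀ σ ∈ G, ∀ v ∈ C, (fun i => v (σ.symm i)) ∈ C)
    {w : BV m} (hw : w ∈ C) (hn : hammingNorm w = 1) :
    (C : Set (BV m)) = Set.univ := by
  obtain ⟨i, hi⟩ := wt1 hn
  have hsingles : ∀ j : Fin m, (Pi.single j 1 : BV m) ∈ C := by
    intro j
    obtain ⟨σ, hσ, hij⟩ := Gtrans hm G hG i j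
    have h1 : pact σ w ∈ C := hInv σ hσ w hw
    have h2 : pact σ w = (Pi.single j 1 : BV m) := by
      apply bv_ext_supp
      intro x
      show w (σ.symm x) ≠ 0 ↔ _
      rw [hi, single_supp, Equiv.symm_apply_eq, hij]
    rwa [h2] at h1
  apply Set.eq_univ_of_forall
  intro v
  have : v = ∑ j, Pi.single j (v j) := (Finset.univ_sum_single v).symm
  rw [this]
  apply Submodule.sum_mem
  intro j _
  rcases z2cases (v j) with h | h
  · rw [h, Pi.single_zero]; exact C.zero_mem
  · rw [h]; exact hsingles j

-- δ = m case
lemma caseRep {w : BV m} (hw : w ∈ C) (hn : hammingNorm w = m)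
    (hmin : ∀ c ∈ C, c ≠ 0 → m ≤ hammingNorm c) :
    (C : Set (BV m)) = {0, fun _ => 1} := by
  have hfull : ∀ v : BV m, hammingNorm v = m → v = fun _ => 1 := by
    intro v hv
    have hsupp : supp v = Finset.univ := by
      apply Finset.eq_univ_of_card
      rw [← norm_eq_supp, hv, Fintype.card_fin]
    funext x
    have hx : v x ≠ 0 := mem_supp.1 (hsupp ▸ Finset.mem_univ x)
    rcases z2cases (v x) with h | h
    · exact absurd h hx
    · exact h
  ext c
  constructor
  · intro hc
    rcases eq_or_ne c 0 with h | h
    · exact Or.inl h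
    · refine Or.inr ?_
      have h1 : m ≤ hammingNorm c := hmin c hc h
      have h2 : hammingNorm c ≤ m := by
        have := hammingNorm_le_card_fintype (x := c)
        rwa [Fintype.card_fin] at this
      exact hfull c (le_antisymm h2 h1)
  · rintro (rfl | rfl)
    · exact C.zero_mem
    · rw [← hfull w hn]; exact hw

end Cases

section Even
variable {m : ℕ}

lemma z2one {a : ZMod 2} (h : a ≠ 0) : a = 1 := by
  rcases z2cases a with h0 | h1
  · exact absurd h0 h
  · exact h1

lemma sum_pair {i j : Fin m} :
    (∑ x, (Pi.single i 1 + Pi.single j 1 : BV m) x) = 0 := by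
  simp only [Pi.add_apply]
  rw [Finset.sum_add_distrib, Finset.sum_pi_single', Finset.sum_pi_single']
  simp
  decide

lemma sum_single {i : Fin m} : (∑ x, (Pi.single i 1 : BV m) x) = 1 := by
  rw [Finset.sum_pi_single']
  simp

lemma norm_add_pair {v : BV m} {i j : Fin m} (hij : i ≠ j) (hi : v i ≠ 0) (hj : v j ≠ 0) :
    hammingNorm (v + (Pi.single i 1 + Pi.single j 1)) + 2 = hammingNorm v := by
  have h11 : (1 : ZMod 2) + 1 = 0 := by decide
  have hsupp : supp (v + (Pi.single i 1 + Pi.single j 1)) = supp v \ {i, j} := by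
    ext x
    rw [mem_supp, Finset.mem_sdiff, mem_supp, Finset.mem_insert, Finset.mem_singleton]
    rcases eq_or_ne x i with rfl | h1
    · simp only [Pi.add_apply, Pi.single_apply, if_pos rfl, if_neg hij, add_zero, ne_eq, z2one hi]
      simp [h11]
    · rcases eq_or_ne x j with rfl | h2
      · simp only [Pi.add_apply, Pi.single_apply, if_pos rfl, if_neg h1, zero_add, ne_eq, z2one hj]
        simp [h11]
      · simp [Pi.single_apply, h1, h2]
  rw [norm_eq_supp, norm_eq_supp, hsupp]
  have hsub : ({i, j} : Finset (Fin m)) ⊆ supp v := by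
    intro x hx
    rw [Finset.mem_insert, Finset.mem_singleton] at hx
    rcases hx with rfl | rfl
    · exact mem_supp.2 hi
    · exact mem_supp.2 hj
  rw [Finset.card_sdiff_of_subset hsub, Finset.card_pair hij]
  have := Finset.card_le_card hsub
  rw [Finset.card_pair hij] at this
  omega

variable (G : Subgroup (Perm (Fin m))) (C : Submodule (ZMod 2) (BV m))

lemma pairsIn (hm : 5 ≤ m)
    (hG : ∀ i j k l : Fin m, i ≠ j → k ≠ l →
      ∃ σ ∈ G, (σ i = k ∧ σ j = l) ∨ (σ i = l ∧ σ j = k))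
    (hInv : ∀ σ ∈ G, ∀ v ∈ C, (fun i => v (σ.symm i)) ∈ C)
    {w : BV m} (hw : w ∈ C) (hn : hammingNorm w = 2) :
    ∀ i j : Fin m, i ≠ j → (Pi.single i 1 + Pi.single j 1 : BV m) ∈ C := by
  obtain ⟨a, a', haa, ha⟩ := wt2 hn
  intro i j hij
  obtain ⟨σ, hσ, hcase⟩ := hG a a' i j haa hij
  have h1 : pact σ w ∈ C := hInv σ hσ w hw
  have h2 : pact σ w = Pi.single i 1 + Pi.single j 1 := by
    apply bv_ext_supp
    intro x
    show w (σ.symm x) ≠ 0 ↔ _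
    rw [ha, pair_supp hij]
    have key : ∀ y z, σ y = z → (σ.symm x = y ↔ x = z) := fun y z h => by
      rw [Equiv.symm_apply_eq, h]
    rcases hcase with ⟨k1, k2⟩ | ⟨k1, k2⟩
    · rw [key _ _ k1, key _ _ k2]
    · rw [key _ _ k1, key _ _ k2, or_comm]
  rwa [h2] at h1

lemma caseTwo (hpairs : ∀ i j : Fin m, i ≠ j → (Pi.single i 1 + Pi.single j 1 : BV m) ∈ C)
    (hmin : ∀ c ∈ C, c ≠ 0 → 2 ≤ hammingNorm c) :
    (C : Set (BV m)) = {w : BV m | ∑ i, w i = 0} := by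
  have dir1 : ∀ n : ℕ, ∀ c ∈ C, hammingNorm c ≤ n → (∑ i, c i) = 0 := by
    intro n
    induction n with
    | zero =>
      intro c _ hc
      have : c = 0 := hammingNorm_eq_zero.1 (Nat.le_zero.1 hc)
      simp [this]
    | succ n ih =>
      intro c hc hle
      rcases Nat.lt_or_ge (hammingNorm c) 2 with h2 | h2
      · interval_cases h : hammingNorm c
        · simp [hammingNorm_eq_zero.1 h]
        · exact absurd (hmin c hc (hammingNorm_ne_zero_iff.1 (by omega))) (by omega)
      · obtain ⟨i, j, hij, hi, hj⟩ := two_in_supp h2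
        obtain ⟨p, hpC, hpnorm, hpsum⟩ :
            ∃ p : BV m, p ∈ C ∧ hammingNorm (c + p) + 2 = hammingNorm c ∧ (∑ x, p x) = 0 :=
          ⟨Pi.single i 1 + Pi.single j 1, hpairs i j hij, norm_add_pair hij hi hj, sum_pair⟩
        have hcp : c + p ∈ C := C.add_mem hc hpC
        have hsum : (∑ x, (c + p) x) = 0 := ih _ hcp (by omega)
        have hc2 : (∑ x, c x) = (∑ x, (c + p) x) + (∑ x, p x) := by
          simp only [Pi.add_apply]
          rw [Finset.sum_add_distrib]
          rw [add_assoc, ← Finset.sum_add_distrib]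
          have hz : ∀ x, p x + p x = 0 := fun x => by
            have : ∀ a : ZMod 2, a + a = 0 := by decide
            exact this _
          simp [hz]
        rw [hc2, hsum, hpsum, add_zero]
  have dir2 : ∀ n : ℕ, ∀ v : BV m, (∑ i, v i) = 0 → hammingNorm v ≤ n → v ∈ C := by
    intro n
    induction n with
    | zero =>
      intro v _ hv
      rw [hammingNorm_eq_zero.1 (Nat.le_zero.1 hv)]
      exact C.zero_mem
    | succ n ih =>
      intro v hsum hle
      rcases Nat.lt_or_ge (hammingNorm v) 2 with h2 | h2
      · interval_cases h : hammingNorm v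
        · rw [hammingNorm_eq_zero.1 h]; exact C.zero_mem
        · obtain ⟨i, hi⟩ := wt1 h
          have hv1 : v = Pi.single i 1 := bv_ext_supp (fun x => by rw [hi x, single_supp])
          rw [hv1, sum_single] at hsum
          exact absurd hsum (by decide)
      · obtain ⟨i, j, hij, hi, hj⟩ := two_in_supp h2
        obtain ⟨p, hpC, hpnorm, hpsum⟩ :
            ∃ p : BV m, p ∈ C ∧ hammingNorm (v + p) + 2 = hammingNorm v ∧ (∑ x, p x) = 0 :=
          ⟨Pi.single i 1 + Pi.single j 1, hpairs i j hij, norm_add_pair hij hi hj, sum_pair⟩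
        have hsum' : (∑ x, (v + p) x) = 0 := by
          simp only [Pi.add_apply]
          rw [Finset.sum_add_distrib, hsum, zero_add, hpsum]
        have hvp : v + p ∈ C := ih _ hsum' (by omega)
        have hveq : v = (v + p) + p := by
          rw [add_assoc, bv_add_self, add_zero]
        rw [hveq]
        exact C.add_mem hvp hpC
  ext v
  constructor
  · intro hv; exact dir1 (hammingNorm v) v hv le_rfl
  · intro hv; exact dir2 (hammingNorm v) v hv le_rfl

lemma dual_eq : dualCode {0, (fun _ => 1 : BV m)} = {w : BV m | ∑ i, w i = 0} := by
  ext w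
  constructor
  · intro h
    have := h (fun _ => 1) (Or.inr rfl)
    simpa using this
  · rintro h v (rfl | rfl)
    · simp
    · simpa using h

end Even

section Perfect
variable {m : ℕ} (G : Subgroup (Perm (Fin m))) (C : Submodule (ZMod 2) (BV m))

lemma sts
    (hG : ∀ i j k l : Fin m, i ≠ j → k ≠ l →
      ∃ σ ∈ G, (σ i = k ∧ σ j = l) ∨ (σ i = l ∧ σ j = k))
    (hInv : ∀ σ ∈ G, ∀ v ∈ C, (fun i => v (σ.symm i)) ∈ C)
    {w : BV m} (hw : w ∈ C) (hn : hammingNorm w = 3) :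
    ∀ a b : Fin m, a ≠ b → ∃ t ∈ C, hammingNorm t = 3 ∧ t a ≠ 0 ∧ t b ≠ 0 := by
  obtain ⟨i, j, hij, hi, hj⟩ := two_in_supp (by omega : 2 ≤ hammingNorm w)
  intro a b hab
  obtain ⟨σ, hσ, hcase⟩ := hG i j a b hij hab
  have hsy : ∀ y z : Fin m, σ y = z → σ.symm z = y := fun y z h =>
    (Equiv.symm_apply_eq σ).2 h.symm
  refine ⟨pact σ w, hInv σ hσ w hw, by rw [pact_norm, hn], ?_, ?_⟩
  · show w (σ.symm a) ≠ 0
    rcases hcase with ⟨k1, _⟩ | ⟨_, k2⟩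
    · rw [hsy _ _ k1]; exact hi
    · rw [hsy _ _ k2]; exact hj
  · show w (σ.symm b) ≠ 0
    rcases hcase with ⟨_, k2⟩ | ⟨k1, _⟩
    · rw [hsy _ _ k2]; exact hj
    · rw [hsy _ _ k1]; exact hi

lemma descent
    (hsts : ∀ a b : Fin m, a ≠ b → ∃ t ∈ C, hammingNorm t = 3 ∧ t a ≠ 0 ∧ t b ≠ 0) :
    ∀ (v c : BV m), c ∈ C → 2 ≤ hammingNorm (v + c) →
      ∃ c' ∈ C, hammingNorm (v + c') < hammingNorm (v + c) := by
  intro v c hc h2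
  obtain ⟨i, j, hij, hi, hj⟩ := two_in_supp h2
  obtain ⟨t, htC, ht3, hti, htj⟩ := hsts i j hij
  refine ⟨c + t, C.add_mem hc htC, ?_⟩
  have hvc : v + (c + t) = (v + c) + t := by rw [add_assoc]
  rw [hvc]
  -- supp ((v+c) + t) ⊆ (supp (v+c) \ {i,j}) ∪ (supp t \ {i,j})
  have hsub : supp ((v + c) + t) ⊆ (supp (v + c) \ {i, j}) ∪ (supp t \ {i, j}) := by
    intro x hx
    rw [mem_supp] at hx
    have hxne : x ≠ i ∧ x ≠ j := by
      constructor
      · rintro rfl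
        rw [Pi.add_apply, z2one hi, z2one hti] at hx
        exact hx (by decide)
      · rintro rfl
        rw [Pi.add_apply, z2one hj, z2one htj] at hx
        exact hx (by decide)
    have hor : (v + c) x ≠ 0 ∨ t x ≠ 0 := by
      by_contra hcon
      push_neg at hcon
      rw [Pi.add_apply, hcon.1, hcon.2] at hx
      exact hx (by decide)
    have hnotij : x ∉ ({i, j} : Finset (Fin m)) := by
      rw [Finset.mem_insert, Finset.mem_singleton]
      rintro (rfl | rfl)
      · exact hxne.1 rfl
      · exact hxne.2 rfl
    rcases hor with h | h
    · exact Finset.mem_union_left _ (Finset.mem_sdiff.2 ⟨mem_supp.2 h, hnotij⟩)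
    · exact Finset.mem_union_right _ (Finset.mem_sdiff.2 ⟨mem_supp.2 h, hnotij⟩)
  have hcard := (Finset.card_le_card hsub).trans (Finset.card_union_le _ _)
  have hijsub1 : ({i, j} : Finset (Fin m)) ⊆ supp (v + c) := by
    intro x hx
    rw [Finset.mem_insert, Finset.mem_singleton] at hx
    rcases hx with rfl | rfl
    · exact mem_supp.2 hi
    · exact mem_supp.2 hj
  have hijsub2 : ({i, j} : Finset (Fin m)) ⊆ supp t := by
    intro x hx
    rw [Finset.mem_insert, Finset.mem_singleton] at hx
    rcases hx with rfl | rfl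
    · exact mem_supp.2 hti
    · exact mem_supp.2 htj
  rw [Finset.card_sdiff_of_subset hijsub1, Finset.card_sdiff_of_subset hijsub2, Finset.card_pair hij] at hcard
  rw [norm_eq_supp, norm_eq_supp] at *
  have ht3' : (supp t).card = 3 := ht3
  have h2' : 2 ≤ (supp (v + c)).card := h2
  omega

lemma cover
    (hsts : ∀ a b : Fin m, a ≠ b → ∃ t ∈ C, hammingNorm t = 3 ∧ t a ≠ 0 ∧ t b ≠ 0) :
    ∀ v : BV m, ∃ c ∈ C, hammingNorm (v + c) ≤ 1 := by
  suffices h : ∀ n : ℕ, ∀ v c : BV m, c ∈ C → hammingNorm (v + c) ≤ n →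
      ∃ c' ∈ C, hammingNorm (v + c') ≤ 1 by
    intro v
    exact h (hammingNorm (v + 0)) v 0 C.zero_mem le_rfl
  intro n
  induction n with
  | zero =>
    intro v c hc hle
    exact ⟨c, hc, by omega⟩
  | succ n ih =>
    intro v c hc hle
    rcases Nat.lt_or_ge (hammingNorm (v + c)) 2 with h2 | h2
    · exact ⟨c, hc, by omega⟩
    · obtain ⟨c', hc', hlt⟩ := descent C hsts v c hc h2
      exact ih v c' hc' (by omega)

end Perfect

section Final
variable {m : ℕ}

lemma minDistUnique {C : Set (BV m)} {a b : ℕ}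
    (ha : IsMinDist C a) (hb : IsMinDist C b) : a = b := by
  obtain ⟨u, hu, v, hv, huv, hd⟩ := hb.1
  obtain ⟨u', hu', v', hv', huv', hd'⟩ := ha.1
  have h1 : a ≤ b := hd ▸ ha.2 u hu v hv huv
  have h2 : b ≤ a := hd' ▸ hb.2 u' hu' v' hv' huv'
  omega

lemma minDistNontrivial {C : Set (BV m)} {a : ℕ}
    (ha : IsMinDist C a) (h0 : C = {0}) : False := by
  obtain ⟨u, hu, v, hv, huv, _⟩ := ha.1
  rw [h0, Set.mem_singleton_iff] at hu hv
  exact huv (hu.trans hv.symm)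

lemma partA (G : Subgroup (Perm (Fin m))) (C : Submodule (ZMod 2) (BV m))
    (X : Set (Perm (BV m)))
    (hInv : ∀ σ ∈ G, ∀ v ∈ C, (fun i => v (σ.symm i)) ∈ C)
    (hX : X = {g | ∃ σ ∈ G, ∃ c ∈ C, ∀ v, g v = (fun i => v (σ.symm i)) + c}) :
    ∀ g ∈ X, IsB2Aut g ∧ g '' (C : Set (BV m)) = (C : Set (BV m)) := by
  intro g hg
  rw [hX] at hg
  obtain ⟨σ, hσ, c, hc, hgdef⟩ := hg
  refine ⟨⟨σ, c, hgdef⟩, ?_⟩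
  ext u
  constructor
  · rintro ⟨w, hw, rfl⟩
    rw [hgdef]
    exact C.add_mem (hInv σ hσ w hw) hc
  · intro hu
    refine ⟨pact σ⁻¹ (u + c), ?_, ?_⟩
    · exact hInv σ⁻¹ (G.inv_mem hσ) (u + c) (C.add_mem hu hc)
    · rw [hgdef]
      show pact σ (pact σ⁻¹ (u + c)) + c = u
      rw [pact_pact_inv, add_assoc, bv_add_self, add_zero]

end Final


theorem stmt8 (m : ℕ) (hm : 5 ≤ m)
    (G : Subgroup (Perm (Fin m)))
    -- `G` acts 2-homogeneously on `M`
    (hG : ∀ i j k l : Fin m, i ≠ j → k ≠ l →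
      ∃ σ ∈ G, (σ i = k ∧ σ j = l) ∨ (σ i = l ∧ σ j = k))
    -- `C` is a `G`-invariant `F_2`-subspace of `V`
    (C : Submodule (ZMod 2) (BV m))
    (hInv : ∀ σ ∈ G, ∀ v ∈ C, (fun i => v (σ.symm i)) ∈ C)
    -- `X = T_C ⋊ G`
    (X : Set (Perm (BV m)))
    (hX : X = {g | ∃ σ ∈ G, ∃ c ∈ C, ∀ v, g v = (fun i => v (σ.symm i)) + c}) :
    -- `X ≤ Aut(C)`
    (∀ g ∈ X, IsB2Aut g ∧ g '' (C : Set (BV m)) = (C : Set (BV m))) ∧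
    -- precisely one of the six cases holds
    (∃! k : ℕ,
      (k = 1 ∧ (C : Set (BV m)) = {0}) ∨
      (k = 2 ∧ IsMinDist (C : Set (BV m)) 1 ∧ (C : Set (BV m)) = Set.univ) ∨
      (k = 3 ∧ IsMinDist (C : Set (BV m)) m ∧
        (C : Set (BV m)) = {0, fun _ => 1} ∧ NbrTrans X (C : Set (BV m)) 2) ∨
      (k = 4 ∧ IsMinDist (C : Set (BV m)) 2 ∧
        (C : Set (BV m)) = dualCode {0, fun _ => 1} ∧ NbrTrans X (C : Set (BV m)) 1) ∨
      (k = 5 ∧ IsMinDist (C : Set (BV m)) 3 ∧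
        (∀ v : BV m, ∃! c, c ∈ (C : Set (BV m)) ∧ hammingDist v c ≤ 1) ∧
        NbrTrans X (C : Set (BV m)) 1) ∨
      (k = 6 ∧ (∃ δ, IsMinDist (C : Set (BV m)) δ ∧ 4 ≤ δ ∧ δ < m) ∧
        NbrTrans X (C : Set (BV m)) 2)) := by
  classical
  refine ⟨partA G C X hInv hX, ?_⟩
  have hnt : NbrTrans X (C : Set (BV m)) 2 := nt2 G C X hm hG hInv hX
  have hnt1 : NbrTrans X (C : Set (BV m)) 1 := fun j hj => hnt j (by omega)
  by_cases hC0 : ∀ c ∈ C, c = (0 : BV m)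
  · have hCset : (C : Set (BV m)) = {0} :=
      Set.eq_singleton_iff_unique_mem.2 ⟨C.zero_mem, fun c hc => hC0 c hc⟩
    refine ⟨1, Or.inl ⟨rfl, hCset⟩, ?_⟩
    rintro k (⟨rfl, _⟩ | ⟨rfl, h, _⟩ | ⟨rfl, h, _⟩ | ⟨rfl, h, _⟩ | ⟨rfl, h, _⟩ |
      ⟨rfl, ⟨d, h, _, _⟩, _⟩)
    · rfl
    all_goals exact (minDistNontrivial h hCset).elim
  · push_neg at hC0
    obtain ⟨v0, hv0C, hv0⟩ := hC0
    have hex : ∃ d, ∃ c, c ∈ C ∧ c ≠ 0 ∧ hammingNorm c = d := ⟨_, v0, hv0C, hv0, rfl⟩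
    obtain ⟨δ, hwd', hmin⟩ : ∃ δ, (∃ c, c ∈ C ∧ c ≠ 0 ∧ hammingNorm c = δ) ∧
        ∀ c ∈ C, c ≠ 0 → δ ≤ hammingNorm c :=
      ⟨Nat.find hex, Nat.find_spec hex, fun c hc h0 => Nat.find_le ⟨c, hc, h0, rfl⟩⟩
    obtain ⟨w, hwC, hw0, hwd⟩ := hwd'
    have hMD : IsMinDist (C : Set (BV m)) δ := by
      constructor
      · exact ⟨w, hwC, 0, C.zero_mem, hw0, by rw [hammingDist_zero_right, hwd]⟩
      · intro u hu v hv huv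
        rw [bv_dist]
        apply hmin _ (C.add_mem hu hv)
        intro h0
        apply huv
        have huv2 : u = (u + v) + v := by rw [add_assoc, bv_add_self, add_zero]
        rw [huv2, h0, zero_add]
    have hδ0 : δ ≠ 0 := by
      intro h
      rw [h] at hwd
      exact hw0 (hammingNorm_eq_zero.1 hwd)
    have hδm : δ ≤ m := by
      have := hammingNorm_le_card_fintype (x := w)
      rw [Fintype.card_fin] at this
      omega
    have hclass : ∀ k : ℕ,
        ((k = 1 ∧ (C : Set (BV m)) = {0}) ∨
        (k = 2 ∧ IsMinDist (C : Set (BV m)) 1 ∧ (C : Set (BV m)) = Set.univ) ∨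
        (k = 3 ∧ IsMinDist (C : Set (BV m)) m ∧
          (C : Set (BV m)) = {0, fun _ => 1} ∧ NbrTrans X (C : Set (BV m)) 2) ∨
        (k = 4 ∧ IsMinDist (C : Set (BV m)) 2 ∧
          (C : Set (BV m)) = dualCode {0, fun _ => 1} ∧ NbrTrans X (C : Set (BV m)) 1) ∨
        (k = 5 ∧ IsMinDist (C : Set (BV m)) 3 ∧
          (∀ v : BV m, ∃! c, c ∈ (C : Set (BV m)) ∧ hammingDist v c ≤ 1) ∧
          NbrTrans X (C : Set (BV m)) 1) ∨
        (k = 6 ∧ (∃ d, IsMinDist (C : Set (BV m)) d ∧ 4 ≤ d ∧ d < m) ∧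
          NbrTrans X (C : Set (BV m)) 2)) →
        ∃ d, d = δ ∧ ((k = 2 ∧ d = 1) ∨ (k = 3 ∧ d = m) ∨ (k = 4 ∧ d = 2) ∨
          (k = 5 ∧ d = 3) ∨ (k = 6 ∧ 4 ≤ d ∧ d < m)) := by
      rintro k (⟨rfl, h⟩ | ⟨rfl, h, _⟩ | ⟨rfl, h, _⟩ | ⟨rfl, h, _⟩ | ⟨rfl, h, _⟩ |
        ⟨rfl, ⟨d, h, h4, hdm⟩, _⟩)
      · exact (minDistNontrivial hMD h).elim
      · exact ⟨1, minDistUnique h hMD, Or.inl ⟨rfl, rfl⟩⟩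
      · exact ⟨m, minDistUnique h hMD, Or.inr (Or.inl ⟨rfl, rfl⟩)⟩
      · exact ⟨2, minDistUnique h hMD, Or.inr (Or.inr (Or.inl ⟨rfl, rfl⟩))⟩
      · exact ⟨3, minDistUnique h hMD, Or.inr (Or.inr (Or.inr (Or.inl ⟨rfl, rfl⟩)))⟩
      · exact ⟨d, minDistUnique h hMD, Or.inr (Or.inr (Or.inr (Or.inr ⟨rfl, h4, hdm⟩)))⟩
    by_cases hδ1 : δ = 1
    · refine ⟨2, Or.inr (Or.inl ⟨rfl, hδ1 ▸ hMD,
        caseOne G C hm hG hInv hwC (by omega)⟩), ?_⟩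
      intro k hk
      obtain ⟨d, hdδ, hcs⟩ := hclass k hk
      rcases hcs with ⟨h1, h2⟩ | ⟨h1, h2⟩ | ⟨h1, h2⟩ | ⟨h1, h2⟩ | ⟨h1, h2, h3⟩ <;> omega
    · by_cases hδ2 : δ = 2
      · have hpairs := pairsIn G C hm hG hInv hwC (by omega)
        have hCset : (C : Set (BV m)) = dualCode {0, fun _ => 1} := by
          rw [caseTwo C hpairs (fun c hc h0 => hδ2 ▸ hmin c hc h0), dual_eq]
        refine ⟨4, Or.inr (Or.inr (Or.inr (Or.inl ⟨rfl, hδ2 ▸ hMD, hCset, hnt1⟩))), ?_⟩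
        intro k hk
        obtain ⟨d, hdδ, hcs⟩ := hclass k hk
        rcases hcs with ⟨h1, h2⟩ | ⟨h1, h2⟩ | ⟨h1, h2⟩ | ⟨h1, h2⟩ | ⟨h1, h2, h3⟩ <;> omega
      · by_cases hδ3 : δ = 3
        · have hsts := sts G C hG hInv hwC (by omega)
          have hperf : ∀ v : BV m, ∃! c, c ∈ (C : Set (BV m)) ∧ hammingDist v c ≤ 1 := by
            intro v
            obtain ⟨c, hc, hc1⟩ := cover C hsts v
            refine ⟨c, ⟨hc, by rw [bv_dist]; exact hc1⟩, ?_⟩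
            rintro c' ⟨hc', hd'⟩
            by_contra hne
            have ht : hammingDist c' c ≤ hammingDist c' v + hammingDist v c :=
              hammingDist_triangle _ _ _
            have h1 : hammingDist c' v ≤ 1 := by rw [hammingDist_comm]; exact hd'
            have h2 : hammingDist v c ≤ 1 := by rw [bv_dist]; exact hc1
            have h3 := hMD.2 c' hc' c hc hne
            omega
          refine ⟨5, Or.inr (Or.inr (Or.inr (Or.inr (Or.inl
            ⟨rfl, hδ3 ▸ hMD, hperf, hnt1⟩)))), ?_⟩
          intro k hk
          obtain ⟨d, hdδ, hcs⟩ := hclass k hk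
          rcases hcs with ⟨h1, h2⟩ | ⟨h1, h2⟩ | ⟨h1, h2⟩ | ⟨h1, h2⟩ | ⟨h1, h2, h3⟩ <;> omega
        · by_cases hδM : δ = m
          · have hCset : (C : Set (BV m)) = {0, fun _ => 1} :=
              caseRep C hwC (by omega) (fun c hc h0 => hδM ▸ hmin c hc h0)
            refine ⟨3, Or.inr (Or.inr (Or.inl ⟨rfl, hδM ▸ hMD, hCset, hnt⟩)), ?_⟩
            intro k hk
            obtain ⟨d, hdδ, hcs⟩ := hclass k hk
            rcases hcs with ⟨h1, h2⟩ | ⟨h1, h2⟩ | ⟨h1, h2⟩ | ⟨h1, h2⟩ | ⟨h1, h2, h3⟩ <;> omega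
          · refine ⟨6, Or.inr (Or.inr (Or.inr (Or.inr (Or.inr
              ⟨rfl, ⟨δ, hMD, by omega, by omega⟩, hnt⟩)))), ?_⟩
            intro k hk
            obtain ⟨d, hdδ, hcs⟩ := hclass k hk
            rcases hcs with ⟨h1, h2⟩ | ⟨h1, h2⟩ | ⟨h1, h2⟩ | ⟨h1, h2⟩ | ⟨h1, h2, h3⟩ <;> omega


end Paper
end

section
/- Let G ≤ Sym(M) act 2-homogeneously on M, where |M| = m ≥ 5, let V = F_2^m with G acting by permuting coordinates, and let C be a G-invariant F_2-subspace of V whose minimum distance δ satisfies 4 ≤ δ < m. Then C is (X,2)-neighbour-transitive, where X = T_C ⋊ G = {v ↦ v^σ + c : σ ∈ G, c ∈ C}. -/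
open Equiv

namespace Paper

/-! A vertex at distance `j` from the linear code `C` is `c + e_S` with `c ∈ C` and `|S| = j`.
For `j ≤ 2` the 2-homogeneous group `G` carries `S` onto any other `j`-set `T`, say by `σ`, and
then `v ↦ v^σ + (c' - c^σ)`, which lies in `T_C ⋊ G` because `C` is a `G`-invariant subspace,
sends `c + e_S` to `c' + e_T`. -/

open Finset

section TwoHomogeneous

variable {α : Type*}

def IsTwoHomogeneous (G : Subgroup (Perm α)) : Prop :=
  ∀ i j k l : α, i ≠ j → k ≠ l → ∃ σ ∈ G, (σ i = k ∧ σ j = l) ∨ (σ i = l ∧ σ j = k)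

variable {G : Subgroup (Perm α)}

/-- For `i ≠ k` pick a third point `l`: an element of `G` mapping `{i, l}` onto `{k, l}` either
sends `i` to `k`, or sends `i ↦ l ↦ k`, and then its square does. -/
theorem IsTwoHomogeneous.exists_apply_eq (hG : IsTwoHomogeneous G) (hα : 3 ≤ ENat.card α)
    (i k : α) : ∃ σ ∈ G, σ i = k := by
  obtain rfl | hik := eq_or_ne i k
  · exact ⟨1, G.one_mem, rfl⟩
  obtain ⟨l, hli, hlk⟩ := ENat.exists_ne_ne_of_three_le hα i k
  obtain ⟨σ, hσ, ⟨hi, -⟩ | ⟨hi, hl⟩⟩ := hG i l k l hli.symm hlk.symm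
  · exact ⟨σ, hσ, hi⟩
  · exact ⟨σ * σ, G.mul_mem hσ hσ, by rw [Perm.mul_apply, hi, hl]⟩

theorem IsTwoHomogeneous.exists_map_eq [DecidableEq α] (hG : IsTwoHomogeneous G)
    (hα : 3 ≤ ENat.card α) {S T : Finset α} (hST : #S = #T) (hS : #S ≤ 2) :
    ∃ σ ∈ G, S.map σ.toEmbedding = T := by
  interval_cases h : #S
  · exact ⟨1, G.one_mem, by simp_all [eq_comm, card_eq_zero]⟩
  · obtain ⟨i, rfl⟩ := card_eq_one.mp h
    obtain ⟨k, rfl⟩ := card_eq_one.mp hST.symm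
    obtain ⟨σ, hσ, hik⟩ := hG.exists_apply_eq hα i k
    exact ⟨σ, hσ, by simp [hik]⟩
  · obtain ⟨i, j, hij, rfl⟩ := card_eq_two.mp h
    obtain ⟨k, l, hkl, rfl⟩ := card_eq_two.mp hST.symm
    obtain ⟨σ, hσ, ⟨hi, hj⟩ | ⟨hi, hj⟩⟩ := hG i j k l hij hkl
    · exact ⟨σ, hσ, by simp [hi, hj]⟩
    · exact ⟨σ, hσ, by simp [hi, hj, pair_comm]⟩

end TwoHomogeneous

section AffinePerm

variable {ι R : Type*}

def affinePerm [AddGroup R] (σ : Perm ι) (d : ι → R) : Perm (ι → R) :=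
  (σ.arrowCongr (Equiv.refl R)).trans (Equiv.addRight d)

theorem affinePerm_apply [AddGroup R] (σ : Perm ι) (d : ι → R) (v : ι → R) :
    affinePerm σ d v = (fun i => v (σ.symm i)) + d := rfl

/-- Binary vectors with the same support are equal, and `(u - c)^σ` is supported on
`σ(supp (u - c))`. -/
theorem affinePerm_apply_eq_of_map_filter_ne [Fintype ι] {σ : Perm ι} {u v c c' : ι → ZMod 2}
    (hσ : ({t | u t ≠ c t} : Finset ι).map σ.toEmbedding = ({t | v t ≠ c' t} : Finset ι)) :
    affinePerm σ (c' - fun t => c (σ.symm t)) u = v := by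
  have hbinary : ∀ a b x y : ZMod 2, (a ≠ b ↔ x ≠ y) → a + (y - b) = x := by decide
  funext t
  exact hbinary _ _ _ _ <| by simpa [Equiv.symm_apply_eq] using Finset.ext_iff.mp hσ t

end AffinePerm

theorem stmt10_general (m : ℕ) (hm : 5 ≤ m)
    (G : Subgroup (Perm (Fin m)))
    (hG : ∀ i j k l : Fin m, i ≠ j → k ≠ l →
      ∃ σ ∈ G, (σ i = k ∧ σ j = l) ∨ (σ i = l ∧ σ j = k))
    (C : Submodule (ZMod 2) (BV m))
    (hInv : ∀ σ ∈ G, ∀ v ∈ C, (fun i => v (σ.symm i)) ∈ C)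
    (X : Set (Perm (BV m)))
    (hX : X = {g | ∃ σ ∈ G, ∃ c ∈ C, ∀ v, g v = (fun i => v (σ.symm i)) + c}) :
    NbrTrans X (C : Set (BV m)) 2 := by
  subst hX
  rintro j hj u ⟨⟨c, hc, hu⟩, -⟩ v ⟨⟨c', hc', hv⟩, -⟩
  have hm3 : 3 ≤ ENat.card (Fin m) := by
    rw [ENat.card_eq_coe_fintype_card, Fintype.card_fin]
    exact_mod_cast hm.trans' (by norm_num)
  obtain ⟨σ, hσ, hmap⟩ :=
    IsTwoHomogeneous.exists_map_eq hG hm3 (hu.trans hv.symm) (hu.trans_le hj)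
  exact ⟨affinePerm σ _, ⟨σ, hσ, _, C.sub_mem hc' (hInv σ hσ c hc), fun w => rfl⟩,
    affinePerm_apply_eq_of_map_filter_ne hmap⟩

theorem stmt10 (m δ : ℕ) (hm : 5 ≤ m)
    (G : Subgroup (Perm (Fin m)))
    (hG : ∀ i j k l : Fin m, i ≠ j → k ≠ l →
      ∃ σ ∈ G, (σ i = k ∧ σ j = l) ∨ (σ i = l ∧ σ j = k))
    (C : Submodule (ZMod 2) (BV m))
    (hInv : ∀ σ ∈ G, ∀ v ∈ C, (fun i => v (σ.symm i)) ∈ C)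
    (hδ : IsMinDist (C : Set (BV m)) δ) (h4 : 4 ≤ δ) (hlt : δ < m)
    (X : Set (Perm (BV m)))
    (hX : X = {g | ∃ σ ∈ G, ∃ c ∈ C, ∀ v, g v = (fun i => v (σ.symm i)) + c}) :
    NbrTrans X (C : Set (BV m)) 2 :=
  stmt10_general m hm G hG C hInv X hX

end Paper
end

section
/- Let C be an F_2-linear code in H(m,2) whose minimum distance δ satisfies 3 ≤ δ < m, and suppose that for some integer λ ≥ 1 the set of weight-δ codewords of C forms a 2-(m,δ,λ) design, i.e., for every pair of distinct coordinates i,j ∈ M, exactly λ codewords α ∈ C of weight δ satisfy α_i = α_j = 1. Let δ^⊥ denote the minimum distance of the dual code C^⊥. Then m − 1 ≤ (δ − 1)(δ^⊥ − 1). -/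
open Equiv

namespace Paper

/-! Fix a minimum-weight dual word `w` and a coordinate `i` in its support, and let `r` be the
number of weight-`δ` codewords `α` with `α i = 1`. Counting the pairs `(α, j)` with `j ≠ i` and
`α j = 1` gives `r (δ - 1) = λ (m - 1)`. Since `α ⬝ w = 0` while `α i w i = 1`, each such `α`
meets the support of `w` in a second coordinate, and each of those `δ^⊥ - 1` coordinates lies
in `λ` of them, so `r ≤ λ (δ^⊥ - 1)`. -/

open Finset

theorem exists_ne_ne_zero_of_sum_eq_zero {ι M : Type*} [Fintype ι] [AddCommMonoid M]
    {f : ι → M} (hf : ∑ t, f t = 0) {i : ι} (hi : f i ≠ 0) : ∃ j ≠ i, f j ≠ 0 := by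
  by_contra! h
  exact hi (by rwa [Fintype.sum_eq_single i h] at hf)

section Design

variable {ι R : Type*} [Fintype ι] [DecidableEq ι] [DecidableEq R]

theorem card_filter_ne_zero_mul_eq_of_design [Zero R] (B : Finset (ι → R)) (k lam : ℕ)
    (hk : ∀ α ∈ B, hammingNorm α = k) (i : ι)
    (hlam : ∀ j ≠ i, #{α ∈ B | α i ≠ 0 ∧ α j ≠ 0} = lam) :
    #{α ∈ B | α i ≠ 0} * (k - 1) = (Fintype.card ι - 1) * lam := by
  rw [← card_univ, ← card_erase_of_mem (mem_univ i)]
  refine card_mul_eq_card_mul (fun α j => α j ≠ 0) (fun α hα => ?_) (fun j hj => ?_)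
  · obtain ⟨hαB, hαi⟩ := mem_filter.mp hα
    rw [bipartiteAbove, filter_erase, card_erase_of_mem (by simpa using hαi), ← hk α hαB,
      hammingNorm]
  · rw [bipartiteBelow, filter_filter]
    exact hlam j (ne_of_mem_erase hj)

variable [NonUnitalNonAssocSemiring R] [NoZeroDivisors R]

theorem card_filter_ne_zero_le_of_orthogonal (B : Finset (ι → R)) (lam : ℕ) (w : ι → R)
    (hw : ∀ α ∈ B, ∑ t, α t * w t = 0) (i : ι) (hwi : w i ≠ 0)
    (hlam : ∀ j ≠ i, #{α ∈ B | α i ≠ 0 ∧ α j ≠ 0} ≤ lam) :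
    #{α ∈ B | α i ≠ 0} ≤ (hammingNorm w - 1) * lam := by
  have hi : i ∈ ({j | w j ≠ 0} : Finset ι) := by simpa using hwi
  rw [hammingNorm, ← card_erase_of_mem hi, ← mul_one #{α ∈ B | α i ≠ 0}]
  refine card_mul_le_card_mul (fun α j => α j ≠ 0) (fun α hα => ?_) (fun j hj => ?_)
  · obtain ⟨hαB, hαi⟩ := mem_filter.mp hα
    obtain ⟨j, hji, hj⟩ := exists_ne_ne_zero_of_sum_eq_zero (hw α hαB) (mul_ne_zero hαi hwi)
    refine one_le_card.mpr ⟨j, mem_filter.mpr ⟨?_, left_ne_zero_of_mul hj⟩⟩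
    simpa [hji] using right_ne_zero_of_mul hj
  · rw [bipartiteBelow, filter_filter]
    exact hlam j (ne_of_mem_erase hj)

theorem card_sub_one_le_of_design_of_orthogonal (B : Finset (ι → R)) (k lam : ℕ)
    (hk : ∀ α ∈ B, hammingNorm α = k) (hlam_pos : 0 < lam)
    (hlam : ∀ i j, i ≠ j → #{α ∈ B | α i ≠ 0 ∧ α j ≠ 0} = lam) (w : ι → R)
    (hw : ∀ α ∈ B, ∑ t, α t * w t = 0) (hw0 : w ≠ 0) :
    Fintype.card ι - 1 ≤ (k - 1) * (hammingNorm w - 1) := by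
  obtain ⟨i, hwi⟩ := Function.ne_iff.mp hw0
  have hlam_i : ∀ j ≠ i, #{α ∈ B | α i ≠ 0 ∧ α j ≠ 0} = lam := fun j hj => hlam i j hj.symm
  refine le_of_mul_le_mul_right ?_ hlam_pos
  calc (Fintype.card ι - 1) * lam
      = #{α ∈ B | α i ≠ 0} * (k - 1) :=
        (card_filter_ne_zero_mul_eq_of_design B k lam hk i hlam_i).symm
    _ ≤ (hammingNorm w - 1) * lam * (k - 1) := by
        gcongr
        exact card_filter_ne_zero_le_of_orthogonal B lam w hw i hwi fun j hj => (hlam_i j hj).le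
    _ = (k - 1) * (hammingNorm w - 1) * lam := by ring

end Design

theorem ZMod.ne_zero_iff_eq_one_of_two (x : ZMod 2) : x ≠ 0 ↔ x = 1 :=
  ⟨Fin.eq_one_of_ne_zero x, fun h => h ▸ one_ne_zero⟩

theorem sub_mem_dualCode {m : ℕ} {D : Set (BV m)} {u v : BV m} (hu : u ∈ dualCode D)
    (hv : v ∈ dualCode D) : u - v ∈ dualCode D := fun α hα => by
  simp only [Pi.sub_apply, mul_sub, sum_sub_distrib, hu α hα, hv α hα, sub_zero]

theorem stmt13_general (m δ δd lam : ℕ) (C : Submodule (ZMod 2) (BV m))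
    (hlam : 1 ≤ lam)
    -- the weight-`δ` codewords form a 2-(m,δ,λ) design
    (hdes : ∀ i j : Fin m, i ≠ j →
      {α : BV m | α ∈ C ∧ hammingDist α 0 = δ ∧ α i = 1 ∧ α j = 1}.ncard = lam)
    -- `δ^⊥` is the minimum distance of the dual code
    (hdual : IsMinDist (dualCode (C : Set (BV m))) δd) :
    m - 1 ≤ (δ - 1) * (δd - 1) := by
  classical
  obtain ⟨⟨u, hu, v, hv, huv, rfl⟩, -⟩ := hdual
  set B : Finset (BV m) := {α | α ∈ C ∧ hammingNorm α = δ}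
  have hB : ∀ i j, i ≠ j → #{α ∈ B | α i ≠ 0 ∧ α j ≠ 0} = lam := by
    intro i j hij
    rw [← hdes i j hij, ← Set.ncard_coe_finset]
    congr
    ext α
    simp [B, hammingDist_zero_right, ZMod.ne_zero_iff_eq_one_of_two, and_assoc]
  have hBC : ∀ α ∈ B, α ∈ C := fun α hα => (mem_filter.mp hα).2.1
  rw [hammingDist_eq_hammingNorm, neg_add_eq_sub]
  simpa using card_sub_one_le_of_design_of_orthogonal B δ lam
    (fun α hα => (mem_filter.mp hα).2.2) hlam hB (v - u) (fun α hα => sub_mem_dualCode hv hu α (hBC α hα)) (sub_ne_zero.mpr huv.symm)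

theorem stmt13 (m δ δd lam : ℕ) (C : Submodule (ZMod 2) (BV m))
    (hδ : IsMinDist (C : Set (BV m)) δ) (h3 : 3 ≤ δ) (hlt : δ < m)
    (hlam : 1 ≤ lam)
    -- the weight-`δ` codewords form a 2-(m,δ,λ) design
    (hdes : ∀ i j : Fin m, i ≠ j →
      {α : BV m | α ∈ C ∧ hammingDist α 0 = δ ∧ α i = 1 ∧ α j = 1}.ncard = lam)
    -- `δ^⊥` is the minimum distance of the dual code
    (hdual : IsMinDist (dualCode (C : Set (BV m))) δd) :
    m - 1 ≤ (δ - 1) * (δd - 1) :=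
  stmt13_general m δ δd lam C hlam hdes hdual

end Paper
end

section
/- Let C be an (X,1)-neighbour-transitive code in H(m,q) with minimum distance δ ≥ 3 and |C| > 1. Then for every entry i ∈ M, the induced group X_i^{Q_i} acts 2-transitively on Q_i. -/
open Equiv

namespace Paper

/-!
A codeword `α` is the unique codeword nearest to each of its neighbours, because `δ ≥ 3`.
Hence an element of `X` carrying one neighbour of `α` to another neighbour of a codeword `β`
carries `α` to `β`, and the entry in which the neighbour differs from `α` to the corresponding
entry for `β`. With `β = α` this makes the stabiliser of `α i` in `X_i^{Q_i}` transitive on the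
other letters; since `X` is also transitive on entries and `|C| > 1`, two codewords differ in
entry `i`, so `X_i^{Q_i}` moves `α i`. A permutation group in which some point is moved and
its stabiliser is transitive on the remaining points is 2-transitive.
-/

open Function

theorem exists_mem_apply_pair_of_stabilizer_transitive {Q : Type*} (G : Subgroup (Perm Q))
    (p : Q) (hfix : ∀ x y, x ≠ p → y ≠ p → ∃ π ∈ G, π p = p ∧ π x = y)
    (hmove : ∃ π ∈ G, π p ≠ p) {a b a' b' : Q} (hab : a ≠ b) (ha'b' : a' ≠ b') :
    ∃ π ∈ G, π a = a' ∧ π b = b' := by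
  have htrans : ∀ b, ∃ π ∈ G, π b = p := by
    intro b
    by_cases hb : b = p
    · exact ⟨1, G.one_mem, hb⟩
    obtain ⟨τ, hτ, hτp⟩ := hmove
    obtain ⟨σ, hσ, -, hσb⟩ := hfix b (τ p) hb hτp
    exact ⟨τ⁻¹ * σ, G.mul_mem (G.inv_mem hτ) hσ, by simp [hσb]⟩
  have hpair : ∀ a b, a ≠ b → ∃ π ∈ G, π b = p ∧ π a ≠ p := fun a b hab ↦
    let ⟨π, hπ, hπb⟩ := htrans b
    ⟨π, hπ, hπb, fun h ↦ hab (π.injective (h.trans hπb.symm))⟩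
  obtain ⟨π, hπ, hπb, hπa⟩ := hpair a b hab
  obtain ⟨π', hπ', hπ'b, hπ'a⟩ := hpair a' b' ha'b'
  obtain ⟨σ, hσ, hσp, hσa⟩ := hfix _ _ hπa hπ'a
  refine ⟨π'⁻¹ * σ * π, G.mul_mem (G.mul_mem (G.inv_mem hπ') hσ) hπ, ?_, ?_⟩
  · simp [hσa]
  · simp [hπb, hσp, Equiv.symm_apply_eq, hπ'b]

section Automorphism

variable {m : ℕ} {Q : Type*} {g : Perm (Fin m → Q)} {h : Fin m → Perm Q} {σ : Perm (Fin m)}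

theorem IsQAutPair.apply_perm (hp : IsQAutPair g h σ) (α : Fin m → Q) (k : Fin m) :
    g α (σ k) = h (σ k) (α k) := by
  rw [hp, σ.symm_apply_apply]

theorem IsQAutPair.hammingDist_eq [DecidableEq Q] (hp : IsQAutPair g h σ)
    (u v : Fin m → Q) : hammingDist (g u) (g v) = hammingDist u v :=
  Finset.card_equiv σ.symm fun j ↦ by simp [hp u j, hp v j]

theorem IsQAutPair.mul {g' : Perm (Fin m → Q)} {h' : Fin m → Perm Q} {σ' : Perm (Fin m)}
    (hp : IsQAutPair g h σ) (hp' : IsQAutPair g' h' σ') :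
    IsQAutPair (g' * g) (fun k ↦ h' k * h (σ'.symm k)) (σ' * σ) := by
  intro α j
  simp only [Perm.mul_apply, hp' (g α) j, hp α]
  rfl

theorem IsQAutPair.inv (hp : IsQAutPair g h σ) :
    IsQAutPair g⁻¹ (fun k ↦ (h (σ k))⁻¹) σ⁻¹ := by
  intro β j
  show g⁻¹ β j = (h (σ j))⁻¹ (β (σ j))
  rw [Perm.eq_inv_iff_eq, ← hp.apply_perm, Perm.coe_inv, apply_symm_apply]

end Automorphism

def inducedSubgroup {m : ℕ} {Q : Type*} (X : Subgroup (Perm (Fin m → Q))) (i : Fin m) :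
    Subgroup (Perm Q) where
  carrier := indQ (X : Set (Perm (Fin m → Q))) i
  one_mem' := ⟨1, X.one_mem, fun _ ↦ 1, 1, fun _ _ ↦ rfl, rfl, rfl⟩
  mul_mem' := by
    rintro _ _ ⟨g, hg, h, σ, hp, hσ, rfl⟩ ⟨g', hg', h', σ', hp', hσ', rfl⟩
    refine ⟨g * g', X.mul_mem hg hg', _, _, hp'.mul hp, by simp [hσ, hσ'], ?_⟩
    simp [σ.symm_apply_eq.mpr hσ.symm]
  inv_mem' := by
    rintro _ ⟨g, hg, h, σ, hp, hσ, rfl⟩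
    exact ⟨g⁻¹, X.inv_mem hg, _, _, hp.inv, σ.symm_apply_eq.mpr hσ.symm, by simp [hσ]⟩

section NeighbourTransitive

variable {m : ℕ} {Q : Type*} [DecidableEq Q]

theorem hammingDist_update_self (α : Fin m → Q) {k : Fin m} {x : Q} (hx : x ≠ α k) :
    hammingDist (update α k x) α = 1 := by
  rw [hammingDist, Finset.card_eq_one]
  exact ⟨k, by ext j; by_cases hj : j = k <;> simp [hj, hx]⟩

variable {C : Set (Fin m → Q)}
  (hδ : ∀ u ∈ C, ∀ v ∈ C, u ≠ v → 3 ≤ hammingDist u v)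
include hδ

theorem eq_of_hammingDist_eq_one {v c c' : Fin m → Q} (hc : c ∈ C) (hc' : c' ∈ C)
    (hvc : hammingDist v c = 1) (hvc' : hammingDist v c' = 1) : c = c' := by
  by_contra hne
  have := hδ c hc c' hc' hne
  have := hammingDist_triangle_left c c' v
  omega

theorem update_mem_distSet_one {α : Fin m → Q} (hα : α ∈ C) {k : Fin m} {x : Q}
    (hx : x ≠ α k) : update α k x ∈ distSet C 1 := by
  have hd := hammingDist_update_self α hx
  refine ⟨⟨α, hα, hd⟩, fun c hc ↦ Nat.one_le_iff_ne_zero.mpr fun h0 ↦ ?_⟩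
  rw [hammingDist_eq_zero] at h0
  subst h0
  have := hδ _ hc α hα (hammingDist_pos.mp (by omega))
  omega

variable {X : Set (Perm (Fin m → Q))} (hXaut : ∀ g ∈ X, IsQAut g)
  (hXC : ∀ g ∈ X, g '' C = C) (hNT : NbrTrans X C 1)
include hXaut hXC hNT

theorem exists_isQAutPair_map_update {α β : Fin m → Q} (hα : α ∈ C) (hβ : β ∈ C)
    {k k' : Fin m} {x y : Q} (hx : x ≠ α k) (hy : y ≠ β k') :
    ∃ g ∈ X, ∃ h σ, IsQAutPair g h σ ∧ g α = β ∧ σ k = k' ∧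
      h k' (α k) = β k' ∧ h k' x = y := by
  obtain ⟨g, hgX, hg⟩ := hNT 1 le_rfl _ (update_mem_distSet_one hδ hα hx) _
    (update_mem_distSet_one hδ hβ hy)
  obtain ⟨h, σ, hp⟩ := hXaut g hgX
  have hgα : g α = β := by
    refine eq_of_hammingDist_eq_one hδ (hXC g hgX ▸ Set.mem_image_of_mem g hα) hβ ?_
      (hammingDist_update_self β hy)
    rw [← hg, hp.hammingDist_eq, hammingDist_update_self α hx]
  have hσ : σ k = k' := by
    by_contra hne
    have := congrFun hg (σ k)
    rw [hp.apply_perm, update_self, update_of_ne hne, ← hgα, hp.apply_perm] at this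
    exact hx ((h (σ k)).injective this)
  have hαk := hp.apply_perm α k
  have hxk := hp.apply_perm (update α k x) k
  rw [hgα, hσ] at hαk
  rw [hg, hσ, update_self, update_self] at hxk
  exact ⟨g, hgX, h, σ, hp, hgα, hσ, hαk.symm, hxk.symm⟩

theorem exists_mem_indQ_apply_pair {α β : Fin m → Q} (hα : α ∈ C) (hβ : β ∈ C) {i : Fin m}
    {x y : Q} (hx : x ≠ α i) (hy : y ≠ β i) :
    ∃ π ∈ indQ X i, π (α i) = β i ∧ π x = y := by
  obtain ⟨g, hgX, h, σ, hp, -, hσ, hα', hx'⟩ :=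
    exists_isQAutPair_map_update hδ hXaut hXC hNT hα hβ hx hy
  exact ⟨h i, ⟨g, hgX, h, σ, hp, hσ, rfl⟩, hα', hx'⟩

theorem exists_mem_apply_ne [Nontrivial Q] (hC : C.Nontrivial) (i : Fin m) :
    ∃ α ∈ C, ∃ β ∈ C, α i ≠ β i := by
  obtain ⟨u, hu, v, hv, huv⟩ := hC
  obtain ⟨k, hk⟩ := Function.ne_iff.mp huv
  obtain ⟨x, hx⟩ := exists_ne (u i)
  obtain ⟨y, hy⟩ := exists_ne (u k)
  obtain ⟨g, hgX, h, σ, hp, -, hσ, -, -⟩ :=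
    exists_isQAutPair_map_update hδ hXaut hXC hNT hu hu hx hy
  obtain ⟨u', hu', rfl⟩ : u ∈ g '' C := (hXC g hgX).symm ▸ hu
  obtain ⟨v', hv', rfl⟩ : v ∈ g '' C := (hXC g hgX).symm ▸ hv
  refine ⟨u', hu', v', hv', fun he ↦ hk ?_⟩
  rw [← hσ, hp.apply_perm, hp.apply_perm, he]

end NeighbourTransitive

theorem stmt17_general (m : ℕ) (Q : Type) [DecidableEq Q]
    (C : Set (Fin m → Q)) (X : Subgroup (Perm (Fin m → Q)))
    (hXaut : ∀ g ∈ X, IsQAut g)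
    (hXC : ∀ g ∈ X, g '' C = C)
    (hNT : NbrTrans (X : Set (Perm (Fin m → Q))) C 1)
    (hδ : ∀ u ∈ C, ∀ v ∈ C, u ≠ v → 3 ≤ hammingDist u v)
    (hC : C.Nontrivial) :
    ∀ i : Fin m, ∀ a b a' b' : Q, a ≠ b → a' ≠ b' →
      ∃ π ∈ indQ (X : Set (Perm (Fin m → Q))) i, π a = a' ∧ π b = b' := by
  intro i a b a' b' hab ha'b'
  have : Nontrivial Q := ⟨a, b, hab⟩
  obtain ⟨α, hα, β, hβ, hαβ⟩ := exists_mem_apply_ne hδ hXaut hXC hNT hC i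
  obtain ⟨x, hx⟩ := exists_ne (α i)
  obtain ⟨y, hy⟩ := exists_ne (β i)
  obtain ⟨π, hπ, hπα, -⟩ := exists_mem_indQ_apply_pair hδ hXaut hXC hNT hα hβ hx hy
  refine exists_mem_apply_pair_of_stabilizer_transitive (inducedSubgroup X i) (α i)
    (fun x y hx hy ↦ exists_mem_indQ_apply_pair hδ hXaut hXC hNT hα hα hx hy)
    ⟨π, hπ, hπα ▸ hαβ.symm⟩ hab ha'b'

theorem stmt17 (m q : ℕ) (Q : Type) [Fintype Q] [DecidableEq Q]
    (hq : Fintype.card Q = q)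
    (C : Set (Fin m → Q)) (X : Subgroup (Perm (Fin m → Q)))
    (hXaut : ∀ g ∈ X, IsQAut g)
    (hXC : ∀ g ∈ X, g '' C = C)
    (hNT : NbrTrans (X : Set (Perm (Fin m → Q))) C 1)
    (hδ : ∀ u ∈ C, ∀ v ∈ C, u ≠ v → 3 ≤ hammingDist u v)
    (hC : C.Nontrivial) :
    ∀ i : Fin m, ∀ a b a' b' : Q, a ≠ b → a' ≠ b' →
      ∃ π ∈ indQ (X : Set (Perm (Fin m → Q))) i, π a = a' ∧ π b = b' :=
  stmt17_general m Q C X hXaut hXC hNT hδ hC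

end Paper
end
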